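/- arXiv:2402.00697 — 3 statements merged into one kernel-verified Lean document; each statement's English description precedes it below -/
import Mathlib

section
/- Upper-lower-boundary consistency of the inverse plausibility transformation: for every θ in Θ, the probability produced by the inverse plausibility transformation is bounded below by the belief mass of the singleton {θ} and above by its plausibility, i.e. m({θ}) ≤ p_θ ≤ Pl({θ}). -/
open Finset

/-- Plausibility of a subset `S` of the frame of discernment:
sum of the masses of all subsets intersecting `S`. -/
noncomputable def Pl {Θ : Type*} [Fintype Θ] [DecidableEq Θ]
    (m : Finset Θ → ℝ) (S : Finset Θ) : ℝ :=
  ∑ T : Finset Θ, if (T ∩ S).Nonempty then m T else 0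

/-- Redistribution factor `δ(θ, S)`. -/
noncomputable def delta {Θ : Type*} [Fintype Θ] [DecidableEq Θ]
    (m : Finset Θ → ℝ) (θ : Θ) (S : Finset Θ) : ℝ :=
  (Pl m {θ})⁻¹ / ∑ θ' ∈ S, (Pl m {θ'})⁻¹

/-- Inverse plausibility transformation. -/
noncomputable def invPlaus {Θ : Type*} [Fintype Θ] [DecidableEq Θ]
    (m : Finset Θ → ℝ) (θ : Θ) : ℝ :=
  m {θ} + ∑ S ∈ univ.filter (fun S : Finset Θ => {θ} ⊂ S), m S * delta m θ S

theorem inverse_plausibility_upper_lower_boundary_consistency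
    {Θ : Type*} [Fintype Θ] [DecidableEq Θ] [Nonempty Θ]
    (m : Finset Θ → ℝ)
    (hm : ∀ S : Finset Θ, 0 ≤ m S)
    (hsum : ∑ S : Finset Θ, m S = 1)
    (hPl : ∀ θ : Θ, 0 < Pl m {θ}) (θ : Θ) :
    m {θ} ≤ invPlaus m θ ∧ invPlaus m θ ≤ Pl m {θ} := by
  have hδ0 : ∀ S : Finset Θ, 0 ≤ delta m θ S := fun S => by
    apply div_nonneg (inv_nonneg.2 (hPl θ).le)
    exact Finset.sum_nonneg fun θ' _ => inv_nonneg.2 (hPl θ').le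
  have hδ1 : ∀ S : Finset Θ, θ ∈ S → delta m θ S ≤ 1 := fun S hθS => by
    have hden : (Pl m {θ})⁻¹ ≤ ∑ θ' ∈ S, (Pl m {θ'})⁻¹ :=
      Finset.single_le_sum (f := fun θ' => (Pl m {θ'})⁻¹)
        (fun θ' _ => inv_nonneg.2 (hPl θ').le) hθS
    exact div_le_one_of_le₀ hden
      (Finset.sum_nonneg fun θ' _ => inv_nonneg.2 (hPl θ').le)
  constructor
  · have : 0 ≤ ∑ S ∈ univ.filter (fun S : Finset Θ => {θ} ⊂ S), m S * delta m θ S :=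
      Finset.sum_nonneg fun S _ => mul_nonneg (hm S) (hδ0 S)
    rw [invPlaus]; linarith
  · have hPlEq : Pl m {θ} = m {θ} + ∑ S ∈ univ.filter (fun S : Finset Θ => {θ} ⊂ S), m S := by
      have h1 : Pl m {θ} = ∑ T ∈ univ.filter (fun T : Finset Θ => θ ∈ T), m T := by
        rw [Pl, Finset.sum_filter]
        congr 1; ext T
        congr 1
        simp [Finset.Nonempty, Finset.mem_inter]
      rw [h1]
      have hset : univ.filter (fun T : Finset Θ => θ ∈ T)
          = insert {θ} (univ.filter (fun S : Finset Θ => {θ} ⊂ S)) := by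
        ext T
        simp only [Finset.mem_filter, Finset.mem_univ, true_and, Finset.mem_insert]
        constructor
        · intro hT
          rcases eq_or_ne T {θ} with h | h
          · exact Or.inl h
          · exact Or.inr (Finset.ssubset_iff_subset_ne.2
              ⟨Finset.singleton_subset_iff.2 hT, Ne.symm h⟩)
        · rintro (rfl | h)
          · exact Finset.mem_singleton_self θ
          · exact h.subset (Finset.mem_singleton_self θ)
      rw [hset, Finset.sum_insert (by simp [lt_irrefl])]
    rw [hPlEq, invPlaus]
    gcongr with S hS
    have hθS : θ ∈ S := (Finset.mem_filter.1 hS).2.subset (Finset.mem_singleton_self θ)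
    calc m S * delta m θ S ≤ m S * 1 := by
          exact mul_le_mul_of_nonneg_left (hδ1 S hθS) (hm S)
      _ = m S := mul_one _
end

section
/- Upper bound of the inverse plausibility transformation: for every θ in Θ, the probability produced by the inverse plausibility transformation satisfies p_θ ≤ Pl({θ}), i.e. it never exceeds the plausibility of the singleton {θ}. -/
open Finset

theorem inverse_plausibility_upper_bound
    {Θ : Type*} [Fintype Θ] [DecidableEq Θ] [Nonempty Θ]
    (m : Finset Θ → ℝ)
    (hm : ∀ S : Finset Θ, 0 ≤ m S)
    (hsum : ∑ S : Finset Θ, m S = 1)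
    (hPl : ∀ θ : Θ, 0 < Pl m {θ}) (θ : Θ) :
    invPlaus m θ ≤ Pl m {θ} := by
  have hpos : ∀ θ' : Θ, 0 < (Pl m {θ'})⁻¹ := fun θ' => inv_pos.2 (hPl θ')
  have hδ : ∀ S : Finset Θ, {θ} ⊂ S → delta m θ S ≤ 1 := by
    intro S hS
    have hθS : θ ∈ S := hS.1 (mem_singleton_self θ)
    have hb : (Pl m {θ})⁻¹ ≤ ∑ θ' ∈ S, (Pl m {θ'})⁻¹ :=
      Finset.single_le_sum (fun i _ => (hpos i).le) hθS
    have hbpos : 0 < ∑ θ' ∈ S, (Pl m {θ'})⁻¹ := lt_of_lt_of_le (hpos θ) hb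
    rw [delta, div_le_one hbpos]
    exact hb
  have h1 : invPlaus m θ ≤ ∑ S ∈ univ.filter (fun S : Finset Θ => {θ} ⊆ S), m S := by
    rw [invPlaus]
    have hset : univ.filter (fun S : Finset Θ => {θ} ⊆ S)
        = insert ({θ} : Finset Θ) (univ.filter (fun S : Finset Θ => {θ} ⊂ S)) := by
      ext T
      simp only [mem_filter, mem_univ, true_and, mem_insert]
      constructor
      · intro h
        rcases eq_or_lt_of_le h with h' | h'
        · exact Or.inl h'.symm
        · exact Or.inr h'
      · rintro (rfl | h)
        · exact Finset.Subset.refl _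
        · exact h.1
    rw [hset, Finset.sum_insert (by simp [lt_irrefl])]
    gcongr with S hS
    have hS' : {θ} ⊂ S := (mem_filter.1 hS).2
    calc m S * delta m θ S ≤ m S * 1 := by
          exact mul_le_mul_of_nonneg_left (hδ S hS') (hm S)
      _ = m S := mul_one _
  have h2 : ∑ S ∈ univ.filter (fun S : Finset Θ => {θ} ⊆ S), m S = Pl m {θ} := by
    rw [Pl, Finset.sum_filter]
    refine Finset.sum_congr rfl fun T _ => ?_
    congr 1
    simp [Finset.singleton_subset_iff, Finset.Nonempty, eq_comm]
  exact h1.trans h2.le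
end

section
/- The inverse plausibility transformation yields a probability distribution: if the basic belief assignment gives no mass to the empty set, i.e. m(∅) = 0, then Σ_{θ ∈ Θ} p_θ = 1, and p_θ ≥ 0 for every θ ∈ Θ. -/
open Finset

lemma delta_sum {Θ : Type*} [Fintype Θ] [DecidableEq Θ]
    (m : Finset Θ → ℝ) (hPl : ∀ θ : Θ, 0 < Pl m {θ})
    (S : Finset Θ) (hS : S.Nonempty) : ∑ θ ∈ S, delta m θ S = 1 := by
  have hD : 0 < ∑ θ' ∈ S, (Pl m {θ'})⁻¹ :=
    Finset.sum_pos (fun θ _ => inv_pos.2 (hPl θ)) hS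
  unfold delta
  rw [← Finset.sum_div, div_self hD.ne']

lemma delta_nonneg {Θ : Type*} [Fintype Θ] [DecidableEq Θ]
    (m : Finset Θ → ℝ) (hPl : ∀ θ : Θ, 0 < Pl m {θ})
    (θ : Θ) (S : Finset Θ) : 0 ≤ delta m θ S := by
  unfold delta
  apply div_nonneg (inv_nonneg.2 (hPl θ).le)
  exact Finset.sum_nonneg fun θ' _ => inv_nonneg.2 (hPl θ').le

theorem inverse_plausibility_is_probability_distribution
    {Θ : Type*} [Fintype Θ] [DecidableEq Θ] [Nonempty Θ]
    (m : Finset Θ → ℝ)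
    (hm : ∀ S : Finset Θ, 0 ≤ m S)
    (hsum : ∑ S : Finset Θ, m S = 1)
    (hPl : ∀ θ : Θ, 0 < Pl m {θ})
    (hempty : m ∅ = 0) :
    (∑ θ : Θ, invPlaus m θ = 1) ∧ ∀ θ : Θ, 0 ≤ invPlaus m θ := by
  constructor
  · unfold invPlaus
    rw [Finset.sum_add_distrib]
    have h1 : ∑ θ : Θ, m {θ} = ∑ S : Finset Θ, if S.card = 1 then m S else 0 := by
      rw [← Finset.sum_filter]
      have himg : (univ.filter (fun S : Finset Θ => S.card = 1))
          = univ.image (fun θ : Θ => ({θ} : Finset Θ)) := by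
        ext S
        simp [Finset.card_eq_one, eq_comm]
      rw [himg, Finset.sum_image (fun a _ b _ h => Finset.singleton_injective h)]
    have h2 : ∑ θ : Θ, ∑ S ∈ univ.filter (fun S : Finset Θ => {θ} ⊂ S), m S * delta m θ S
        = ∑ S : Finset Θ, if 2 ≤ S.card then m S else 0 := by
      simp_rw [Finset.sum_filter]
      rw [Finset.sum_comm]
      refine Finset.sum_congr rfl fun S _ => ?_
      by_cases hc : 2 ≤ S.card
      · have hcond : ∀ θ : Θ, ({θ} : Finset Θ) ⊂ S ↔ θ ∈ S := by
          intro θ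
          constructor
          · intro h; exact Finset.singleton_subset_iff.1 h.subset
          · intro h
            refine Finset.ssubset_iff_subset_ne.2 ⟨Finset.singleton_subset_iff.2 h, ?_⟩
            intro hEq
            rw [← hEq] at hc
            simp at hc
        simp_rw [hcond]
        rw [if_pos hc, Finset.sum_ite_mem, Finset.univ_inter, ← Finset.mul_sum,
          delta_sum m hPl S (Finset.card_pos.1 (by omega)), mul_one]
      · rw [if_neg hc]
        apply Finset.sum_eq_zero
        intro θ _
        rw [if_neg]
        intro h
        have := Finset.card_lt_card h
        simp at this
        omega
    rw [h1, h2, ← Finset.sum_add_distrib, ← hsum]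
    refine Finset.sum_congr rfl fun S _ => ?_
    rcases Nat.lt_or_ge S.card 1 with h | h
    · have : S = ∅ := Finset.card_eq_zero.1 (by omega)
      simp [this, hempty]
    · rcases Nat.lt_or_ge S.card 2 with h' | h'
      · have : S.card = 1 := by omega
        simp [this]
      · rw [if_neg (by omega), if_pos h']
        ring
  · intro θ
    unfold invPlaus
    apply add_nonneg (hm _)
    exact Finset.sum_nonneg fun S _ => mul_nonneg (hm S) (delta_nonneg m hPl θ S)
end
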